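/- arXiv:1001.1193 — 2 statements merged into one kernel-verified Lean document; each statement's English description precedes it below -/
import Mathlib

section
/- Suppose μ : ℝ → ℂ is differentiable near γ_j and satisfies μ(γ) = e^{γβ/μ(γ)} with μ(γ_j) = i and γ_jβ = B = -π/2 + 2jπ. Then μ'(γ_j) = β/(1 - iB) = (β/(1+B²))(1 + iB). -/
open Complex Real

/-- If μ(γ) = e^{γβ/μ(γ)} near γⱼ, μ(γⱼ) = i, γⱼβ = B = -π/2 + 2jπ, then
μ'(γⱼ) = β/(1 - iB) = (β/(1+B²))(1 + iB). -/
theorem stmt3 (β : ℝ) (hβ : β ≠ 0) (j : ℤ) (B γj : ℝ)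
    (hB : B = -π / 2 + 2 * j * π) (hγ : γj = B / β)
    (μ : ℝ → ℂ) (μ' : ℂ) (hderiv : HasDerivAt μ μ' γj)
    (himp : ∀ᶠ γ in nhds γj, μ γ = Complex.exp ((γ : ℂ) * β / μ γ))
    (hval : μ γj = Complex.I) :
    μ' = (β : ℂ) / (1 - Complex.I * B) ∧
      μ' = ((β : ℂ) / (1 + B ^ 2)) * (1 + Complex.I * B) := by
  have hμ0 : μ γj ≠ 0 := by rw [hval]; exact Complex.I_ne_zero
  have hBc : (γj : ℂ) * β = (B : ℂ) := by
    rw [hγ]; push_cast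
    rw [div_mul_cancel₀]
    exact_mod_cast hβ
  -- derivative of the numerator γ ↦ (γ : ℂ) * β
  have hnum : HasDerivAt (fun γ : ℝ => (γ : ℂ) * β) (β : ℂ) γj := by
    simpa using (Complex.ofRealCLM.hasDerivAt (x := γj)).mul_const (β : ℂ)
  have hdivd : HasDerivAt (fun γ : ℝ => (γ : ℂ) * β / μ γ)
      (((β : ℂ) * μ γj - (γj : ℂ) * β * μ') / μ γj ^ 2) γj := hnum.div hderiv hμ0
  have hg : HasDerivAt (fun γ : ℝ => Complex.exp ((γ : ℂ) * β / μ γ))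
      (Complex.exp ((γj : ℂ) * β / μ γj) *
        (((β : ℂ) * μ γj - (γj : ℂ) * β * μ') / μ γj ^ 2)) γj := hdivd.cexp
  have hμ : HasDerivAt μ
      (Complex.exp ((γj : ℂ) * β / μ γj) *
        (((β : ℂ) * μ γj - (γj : ℂ) * β * μ') / μ γj ^ 2)) γj :=
    hg.congr_of_eventuallyEq himp
  have hexp : Complex.exp ((γj : ℂ) * β / μ γj) = μ γj := (himp.self_of_nhds).symm
  have key := hderiv.unique hμ
  rw [hexp, hval, hBc] at key
  have h1m : (1 : ℂ) - Complex.I * B ≠ 0 := by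
    intro h
    have := congrArg Complex.re h
    simp at this
  have h2 : (1 : ℂ) + (B : ℂ) ^ 2 ≠ 0 := by
    have h0 : (0 : ℝ) < 1 + B ^ 2 := by positivity
    have := h0.ne'
    push_cast
    exact_mod_cast this
  have key2 : μ' * (1 - Complex.I * B) = (β : ℂ) := by
    have hI : (Complex.I) ^ 2 = -1 := Complex.I_sq
    field_simp at key
    linear_combination (-Complex.I) * key + (μ' - (β : ℂ)) * hI
  have h1 : μ' = (β : ℂ) / (1 - Complex.I * B) := by
    rw [eq_div_iff h1m]; exact key2
  refine ⟨h1, ?_⟩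
  rw [h1]
  rw [div_mul_eq_mul_div, div_eq_div_iff h1m h2]
  linear_combination (β : ℂ) * (B : ℂ) ^ 2 * Complex.I_sq
end

section
/- Let B = -π/2 + 2jπ, b : [-1,0] → ℝ continuous with ∫_{-1}^0 b = B, B(t) = ∫_{-1}^t b. Define the operator value (for m ∈ ℤ, mi ≠ -1) φ_m(t) = e^{-B(t)} · ((-i)^m m i - 1)/((1+e^{-B})(mi+1)) - e^{miB(t)} · (mi)/(mi+1). Then φ_m solves (-1 - U)φ = e^{miB(·)} in the sense that -φ_m(t) - (φ_m(0) + ∫_{-1}^t b(s) φ_m(s) ds) = e^{miB(t)} for all t ∈ [-1,0]. -/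
open Real Complex intervalIntegral

/-- The explicit function φ_m solves (-1 - U)φ = e^{miB(·)} where
U(φ)(t) = φ(0) + ∫_{-1}^t b(s)φ(s)ds. -/
theorem stmt15 (j : ℤ) (Bv : ℝ) (hBv : Bv = -π / 2 + 2 * j * π)
    (b B : ℝ → ℝ) (hb : ContinuousOn b (Set.Icc (-1) 0))
    (hB : ∀ t, B t = ∫ s in (-1:ℝ)..t, b s) (hB0 : B 0 = Bv)
    (m : ℤ) (hm : (m : ℂ) * Complex.I ≠ -1)
    (φ : ℝ → ℂ)
    (hφ : ∀ t, φ t = (Real.exp (-B t) : ℂ) *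
        (((-Complex.I) ^ m * (m : ℂ) * Complex.I - 1) /
          ((1 + (Real.exp (-Bv) : ℂ)) * ((m : ℂ) * Complex.I + 1)))
      - Complex.exp ((m : ℂ) * Complex.I * B t) *
          ((m : ℂ) * Complex.I) / ((m : ℂ) * Complex.I + 1)) :
    ∀ t ∈ Set.Icc (-1:ℝ) 0,
      -φ t - (φ 0 + ∫ s in (-1:ℝ)..t, (b s : ℂ) * φ s)
        = Complex.exp ((m : ℂ) * Complex.I * B t) := by
  intro t ht
  obtain ⟨ht1, ht2⟩ := ht
  have hm1 : (m : ℂ) * Complex.I + 1 ≠ 0 := by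
    intro h; apply hm; linear_combination h
  have hE : (1 + (Real.exp (-Bv) : ℂ)) ≠ 0 := by
    have hpos : (0:ℝ) < 1 + Real.exp (-Bv) := by positivity
    intro h
    norm_cast at h
    linarith
  set mi : ℂ := (m : ℂ) * Complex.I with hmi
  set A : ℂ := ((-Complex.I) ^ m * (m : ℂ) * Complex.I - 1) /
      ((1 + (Real.exp (-Bv) : ℂ)) * (mi + 1)) with hA
  -- B(-1) = 0
  have hBneg1 : B (-1) = 0 := by rw [hB]; simp
  -- continuity of B on Icc
  have hBcont : ContinuousOn B (Set.Icc (-1:ℝ) 0) := by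
    have h1 : MeasureTheory.IntegrableOn b (Set.uIcc (-1:ℝ) 0) := by
      rw [Set.uIcc_of_le (by norm_num : (-1:ℝ) ≤ 0)]
      exact hb.integrableOn_compact isCompact_Icc
    have := intervalIntegral.continuousOn_primitive_interval (a := (-1:ℝ)) (b := 0)
      (μ := MeasureTheory.volume) h1
    rw [Set.uIcc_of_le (by norm_num : (-1:ℝ) ≤ 0)] at this
    exact this.congr fun x hx => hB x
  -- antiderivative
  set F : ℝ → ℂ := fun s => -(Real.exp (-B s) : ℂ) * A
      - Complex.exp (mi * B s) / (mi + 1) with hF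
  have hsub : Set.Icc (-1:ℝ) t ⊆ Set.Icc (-1:ℝ) 0 := Set.Icc_subset_Icc le_rfl ht2
  have hFcont : ContinuousOn F (Set.Icc (-1:ℝ) t) := by
    have hBc : ContinuousOn B (Set.Icc (-1:ℝ) t) := hBcont.mono hsub
    apply ContinuousOn.sub
    · exact (ContinuousOn.neg
        (Complex.continuous_ofReal.comp_continuousOn
          (Real.continuous_exp.comp_continuousOn hBc.neg))).mul continuousOn_const
    · exact (Complex.continuous_exp.comp_continuousOn
        (continuousOn_const.mul (Complex.continuous_ofReal.comp_continuousOn hBc))).div_const _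
  have hφcont : ContinuousOn φ (Set.Icc (-1:ℝ) 0) := by
    have h1 : ContinuousOn (fun t => (Real.exp (-B t) : ℂ)) (Set.Icc (-1:ℝ) 0) :=
      Complex.continuous_ofReal.comp_continuousOn
        (Real.continuous_exp.comp_continuousOn hBcont.neg)
    have h2 : ContinuousOn (fun t => Complex.exp (mi * B t)) (Set.Icc (-1:ℝ) 0) :=
      Complex.continuous_exp.comp_continuousOn
        (continuousOn_const.mul (Complex.continuous_ofReal.comp_continuousOn hBcont))
    have h3 := (h1.mul (continuousOn_const (c := A))).sub
      ((h2.mul (continuousOn_const (c := mi))).div_const (mi + 1))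
    exact h3.congr fun x hx => hφ x
  have hbφInt : IntervalIntegrable (fun s => (b s : ℂ) * φ s) MeasureTheory.volume (-1) t := by
    apply ContinuousOn.intervalIntegrable
    rw [Set.uIcc_of_le (by linarith : (-1:ℝ) ≤ t)]
    exact ((Complex.continuous_ofReal.comp_continuousOn (hb.mono hsub)).mul
      (hφcont.mono hsub))
  -- derivative of F at interior points
  have hderiv : ∀ x ∈ Set.Ioo (-1:ℝ) t, HasDerivWithinAt F ((b x : ℂ) * φ x) (Set.Ioi x) x := by
    intro x hx
    have hxI : x ∈ Set.Ioo (-1:ℝ) 0 := ⟨hx.1, lt_of_lt_of_le hx.2 ht2⟩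
    have hnhds : Set.Icc (-1:ℝ) 0 ∈ nhds x := Icc_mem_nhds hxI.1 hxI.2
    have hbx : ContinuousAt b x := hb.continuousAt hnhds
    have hbint : IntervalIntegrable b MeasureTheory.volume (-1) x := by
      apply ContinuousOn.intervalIntegrable
      rw [Set.uIcc_of_le (le_of_lt hxI.1)]
      exact hb.mono (Set.Icc_subset_Icc le_rfl hxI.2.le)
    have hmeas : StronglyMeasurableAtFilter b (nhds x) :=
      ⟨Set.Icc (-1:ℝ) 0, hnhds, hb.aestronglyMeasurable measurableSet_Icc⟩
    have hBder : HasDerivAt B (b x) x := by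
      have h := intervalIntegral.integral_hasDerivAt_right hbint hmeas hbx
      have heq : B = fun u => ∫ s in (-1:ℝ)..u, b s := funext hB
      rw [heq]; exact h
    have hBderC : HasDerivAt (fun s => ((B s : ℝ) : ℂ)) ((b x : ℝ) : ℂ) x := by
      simpa using hBder.ofReal_comp
    have h1 : HasDerivAt (fun s => Complex.exp (-(B s : ℂ)))
        (Complex.exp (-(B x : ℂ)) * (-(b x : ℂ))) x := hBderC.neg.cexp
    have h2 : HasDerivAt (fun s => Complex.exp (mi * (B s : ℂ)))
        (Complex.exp (mi * (B x : ℂ)) * (mi * (b x : ℂ))) x :=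
      (hBderC.const_mul mi).cexp
    have hFd : HasDerivAt F
        (-(Complex.exp (-(B x : ℂ)) * (-(b x : ℂ))) * A
          - Complex.exp (mi * (B x : ℂ)) * (mi * (b x : ℂ)) / (mi + 1)) x := by
      have hFeq : F = fun s => -(Complex.exp (-(B s : ℂ))) * A
          - Complex.exp (mi * (B s : ℂ)) / (mi + 1) := by
        funext s
        simp only [hF]
        rw [Complex.ofReal_exp, Complex.ofReal_neg]
      rw [hFeq]
      exact ((h1.neg.mul_const A)).sub (h2.div_const (mi + 1))
    have hkey : -(Complex.exp (-(B x : ℂ)) * (-(b x : ℂ))) * A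
          - Complex.exp (mi * (B x : ℂ)) * (mi * (b x : ℂ)) / (mi + 1)
        = (b x : ℂ) * φ x := by
      rw [hφ x, Complex.ofReal_exp, Complex.ofReal_neg]
      field_simp
    rw [← hkey]
    exact hFd.hasDerivWithinAt
  have hInt : (∫ s in (-1:ℝ)..t, (b s : ℂ) * φ s) = F t - F (-1) :=
    intervalIntegral.integral_eq_sub_of_hasDeriv_right_of_le (by linarith) hFcont hderiv hbφInt
  -- the key exponential identity
  have hexpBv : Complex.exp (mi * (Bv : ℂ)) = (-Complex.I) ^ m := by
    rw [hBv]
    have harg : mi * ((-π / 2 + 2 * (j:ℝ) * π : ℝ) : ℂ)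
        = (m : ℂ) * (((-(π / 2) : ℝ) : ℂ) * Complex.I) + ((m * j : ℤ) : ℂ) * (2 * π * Complex.I) := by
      push_cast [hmi]; ring
    rw [harg, Complex.exp_add, Complex.exp_int_mul_two_pi_mul_I, mul_one,
      Complex.exp_int_mul, Complex.exp_mul_I, ← Complex.ofReal_cos, ← Complex.ofReal_sin,
      Real.cos_neg, Real.sin_neg, Real.cos_pi_div_two, Real.sin_pi_div_two]
    norm_num
  -- finish with algebra
  rw [hInt, hφ t, hφ 0, hB0]
  simp only [hF, hBneg1, neg_zero, Real.exp_zero, Complex.ofReal_zero, mul_zero,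
    Complex.exp_zero, Complex.ofReal_one]
  rw [hexpBv, hA]
  have hE' : (1 + Complex.exp (-(Bv:ℂ))) ≠ 0 := by
    rwa [show Complex.exp (-(Bv:ℂ)) = ((Real.exp (-Bv) : ℝ) : ℂ) by
      rw [Complex.ofReal_exp, Complex.ofReal_neg]]
  field_simp [hE', hm1]
  ring
end
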